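/- arXiv:2502.01594 — 4 statements merged into one kernel-verified Lean document; each statement's English description precedes it below -/
import Mathlib

section
/- Let f : ℝ^d → ℝ be thrice differentiable whose Hessian is H-Lipschitz, let θ* satisfy ∇f(θ*) = 0 with ∇²f(θ*) positive semidefinite, and let ρ be a mean-zero probability measure on ℝ^d with E_{θ∼ρ}[θθᵀ] = c²·I for some c ≥ ‖θ*‖₂, c > 0. Set γ := 2√d·H·λ_max(∇²f(θ*))·M₃ + d·H²·M₄ and assume λ_max(EGOP(f)) + γ > 0. If L₁,…,L_d > 0 are constants with which f satisfies coordinate-wise smoothness on ℝ^d, then Σᵢ Lᵢ ≥ (d/(2c)) · max over ν ∈ {−1/√d, +1/√d}^d of (⟨ν, EGOP(f)·ν⟩ − γ)/√(λ_max(EGOP(f)) + γ). -/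
open MeasureTheory Matrix
open scoped RealInnerProductSpace

noncomputable section

variable {d : ℕ}

/-- Expected gradient outer product matrix of `f` w.r.t. measure `ρ`. -/
def EGOP (f : EuclideanSpace ℝ (Fin d) → ℝ) (ρ : Measure (EuclideanSpace ℝ (Fin d))) :
    Matrix (Fin d) (Fin d) ℝ :=
  fun i j => ∫ θ, gradient f θ i * gradient f θ j ∂ρ

/-- Hessian matrix of `f` at `θ`. -/
def hessMat (f : EuclideanSpace ℝ (Fin d) → ℝ) (θ : EuclideanSpace ℝ (Fin d)) :
    Matrix (Fin d) (Fin d) ℝ :=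
  fun i j => fderiv ℝ (gradient f) θ (EuclideanSpace.single j (1:ℝ)) i

/-- ℓ₂ operator (spectral) norm of a matrix. -/
def opNormM (M : Matrix (Fin d) (Fin d) ℝ) : ℝ :=
  ‖LinearMap.toContinuousLinearMap (Matrix.toEuclideanLin M)‖

/-- Largest eigenvalue (Rayleigh characterization) of a symmetric matrix. -/
def lambdaMax (M : Matrix (Fin d) (Fin d) ℝ) : ℝ :=
  sSup {r : ℝ | ∃ v : EuclideanSpace ℝ (Fin d), ‖v‖ = 1 ∧ r = ⟪v, Matrix.toEuclideanLin M v⟫}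

/-- The Hessian of `f` is `H`-Lipschitz. -/
def HessLipschitz (f : EuclideanSpace ℝ (Fin d) → ℝ) (H : ℝ) : Prop :=
  ∀ θ₁ θ₂ : EuclideanSpace ℝ (Fin d), opNormM (hessMat f θ₁ - hessMat f θ₂) ≤ H * ‖θ₁ - θ₂‖

/-- Coordinate-wise smoothness with constants `L` within the set `Θ`. -/
def CoordSmoothOn (f : EuclideanSpace ℝ (Fin d) → ℝ) (L : Fin d → ℝ)
    (Θ : Set (EuclideanSpace ℝ (Fin d))) : Prop :=
  ∀ θ₁ ∈ Θ, ∀ θ₂ ∈ Θ,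
    |f θ₁ - f θ₂ - ⟪gradient f θ₂, θ₁ - θ₂⟫| ≤ (1/2) * ∑ i, L i * (θ₁ i - θ₂ i)^2

/-- Coordinate-wise smoothness with constants `L` on all of ℝ^d. -/
def CoordSmooth (f : EuclideanSpace ℝ (Fin d) → ℝ) (L : Fin d → ℝ) : Prop :=
  CoordSmoothOn f L Set.univ

/-!
Let `A` be the Hessian at `θs`. Since the Hessian is `H`-Lipschitz, `∇f θ = A (θ - θs)` up to
`H ‖θ - θs‖²`, so for a unit vector `x` the quadratic form `⟪x, EGOP x⟫ = E ⟪x, ∇f θ⟫²` is within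
`γ` of `E ⟪A x, θ - θs⟫² = c² ‖A x‖² + ⟪A x, θs⟫²`. Comparing with `λ_max(EGOP)` gives
`λ_max(A) ≤ √(λ_max(EGOP) + γ) / c`, and at the sign vector `ν` (a unit vector) it gives
`⟪ν, EGOP ν⟫ - γ ≤ 2 c² ‖A ν‖² ≤ 2 c² λ_max(A) ⟪ν, A ν⟫`. Finally, coordinate-wise smoothness bounds
the Hessian form: `⟪ν, A ν⟫ ≤ ∑ Lᵢ νᵢ² = (∑ Lᵢ) / d`.
-/

theorem LinearMap.IsPositive.inner_sq_le {F : Type*} [NormedAddCommGroup F]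
    [InnerProductSpace ℝ F] {T : F →ₗ[ℝ] F} (hT : T.IsPositive) (x y : F) :
    ⟪T x, y⟫ ^ 2 ≤ ⟪T x, x⟫ * ⟪T y, y⟫ := by
  have hsymm : ⟪T y, x⟫ = ⟪T x, y⟫ := by rw [hT.isSymmetric, real_inner_comm]
  have hquad : ∀ t : ℝ, 0 ≤ ⟪T y, y⟫ * (t * t) + 2 * ⟪T x, y⟫ * t + ⟪T x, x⟫ := fun t => by
    have := hT.inner_nonneg_left (x + t • y)
    simp only [map_add, map_smul, inner_add_left, inner_add_right, real_inner_smul_left,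
      real_inner_smul_right, hsymm] at this
    linarith
  have := discrim_le_zero hquad
  rw [discrim] at this
  linarith

theorem LinearMap.IsPositive.norm_apply_sq_le {F : Type*} [NormedAddCommGroup F]
    [InnerProductSpace ℝ F] {T : F →ₗ[ℝ] F} (hT : T.IsPositive) {r : ℝ}
    (hr : ∀ y, ⟪T y, y⟫ ≤ r * ‖y‖ ^ 2) (x : F) :
    ‖T x‖ ^ 2 ≤ r * ⟪T x, x⟫ := by
  rcases eq_or_ne (T x) 0 with hx | hx
  · simp [hx]
  have hpos : 0 < ‖T x‖ ^ 2 := by positivity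
  -- `‖T x‖⁴ = ⟪T x, T x⟫² ≤ ⟪T x, x⟫ ⟪T (T x), T x⟫ ≤ ⟪T x, x⟫ r ‖T x‖²`
  have h := hT.inner_sq_le x (T x)
  rw [real_inner_self_eq_norm_sq] at h
  nlinarith [hT.inner_nonneg_left x, hr (T x)]

theorem inner_toLp_toEuclideanLin (M : Matrix (Fin d) (Fin d) ℝ) (u : Fin d → ℝ) :
    ⟪WithLp.toLp 2 u, toEuclideanLin M (WithLp.toLp 2 u)⟫ = u ⬝ᵥ M *ᵥ u := by
  simp [EuclideanSpace.inner_eq_star_dotProduct, dotProduct_comm]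

theorem bddAbove_rayleigh (M : Matrix (Fin d) (Fin d) ℝ) :
    BddAbove {r : ℝ | ∃ v : EuclideanSpace ℝ (Fin d), ‖v‖ = 1 ∧ r = ⟪v, toEuclideanLin M v⟫} := by
  refine ⟨opNormM M, ?_⟩
  rintro r ⟨v, hv, rfl⟩
  calc ⟪v, toEuclideanLin M v⟫ ≤ ‖v‖ * ‖LinearMap.toContinuousLinearMap (toEuclideanLin M) v‖ :=
        real_inner_le_norm _ _
    _ ≤ ‖v‖ * (opNormM M * ‖v‖) := by gcongr; exact ContinuousLinearMap.le_opNorm _ _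
    _ = opNormM M := by rw [hv]; ring

theorem inner_le_lambdaMax (M : Matrix (Fin d) (Fin d) ℝ) (x : EuclideanSpace ℝ (Fin d)) :
    ⟪x, toEuclideanLin M x⟫ ≤ lambdaMax M * ‖x‖ ^ 2 := by
  rcases eq_or_ne x 0 with rfl | hx
  · simp
  have hx' : 0 < ‖x‖ := norm_pos_iff.mpr hx
  have h := le_csSup (bddAbove_rayleigh M) ⟨‖x‖⁻¹ • x, by simp [norm_smul, hx'.ne'], rfl⟩
  simp only [map_smul, real_inner_smul_left, real_inner_smul_right] at h
  have := mul_le_mul_of_nonneg_left h (sq_nonneg ‖x‖)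
  field_simp at this
  rwa [mul_comm] at this

theorem lambdaMax_le {M : Matrix (Fin d) (Fin d) ℝ} {b : ℝ} (hb : 0 ≤ b)
    (h : ∀ v : EuclideanSpace ℝ (Fin d), ‖v‖ = 1 → ⟪v, toEuclideanLin M v⟫ ≤ b) :
    lambdaMax M ≤ b :=
  Real.sSup_le (by rintro r ⟨v, hv, rfl⟩; exact h v hv) hb

theorem lambdaMax_nonneg {M : Matrix (Fin d) (Fin d) ℝ} (hM : M.PosSemidef) :
    0 ≤ lambdaMax M :=
  Real.sSup_nonneg <| by
    rintro r ⟨v, -, rfl⟩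
    exact (isPositive_toEuclideanLin_iff.mpr hM).inner_nonneg_right v

theorem norm_toEuclideanLin_sq_le {M : Matrix (Fin d) (Fin d) ℝ} (hM : M.PosSemidef)
    (x : EuclideanSpace ℝ (Fin d)) :
    ‖toEuclideanLin M x‖ ^ 2 ≤ lambdaMax M * ⟪x, toEuclideanLin M x⟫ := by
  rw [real_inner_comm]
  exact (isPositive_toEuclideanLin_iff.mpr hM).norm_apply_sq_le
    (fun y => real_inner_comm y _ ▸ inner_le_lambdaMax M y) x

theorem norm_toEuclideanLin_le {M : Matrix (Fin d) (Fin d) ℝ} (hM : M.PosSemidef)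
    (x : EuclideanSpace ℝ (Fin d)) :
    ‖toEuclideanLin M x‖ ≤ lambdaMax M * ‖x‖ := by
  have hM0 := lambdaMax_nonneg hM
  refine (pow_le_pow_iff_left₀ (norm_nonneg _) (by positivity) two_ne_zero).mp ?_
  calc ‖toEuclideanLin M x‖ ^ 2 ≤ lambdaMax M * ⟪x, toEuclideanLin M x⟫ :=
        norm_toEuclideanLin_sq_le hM x
    _ ≤ lambdaMax M * (lambdaMax M * ‖x‖ ^ 2) := by gcongr; exact inner_le_lambdaMax M x
    _ = (lambdaMax M * ‖x‖) ^ 2 := by ring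

theorem ContDiff.gradient {F : Type*} [NormedAddCommGroup F] [InnerProductSpace ℝ F]
    [CompleteSpace F] {f : F → ℝ} {m n : WithTop ℕ∞} (hf : ContDiff ℝ n f) (hmn : m + 1 ≤ n) :
    ContDiff ℝ m (gradient f) :=
  (InnerProductSpace.toDual ℝ F).symm.contDiff.comp (hf.fderiv_right hmn)

theorem norm_sub_sub_le_of_lipschitz_fderiv {E F : Type*} [NormedAddCommGroup E]
    [NormedSpace ℝ E] [NormedAddCommGroup F] [NormedSpace ℝ F] {g : E → F} {g' : E → E →L[ℝ] F}
    {y : E} {H : ℝ} (hg : ∀ z, HasFDerivAt g (g' z) z) (hH : ∀ z, ‖g' z - g' y‖ ≤ H * ‖z - y‖)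
    (x : E) : ‖g x - g y - g' y (x - y)‖ ≤ H * ‖x - y‖ ^ 2 := by
  rcases eq_or_ne x y with rfl | hxy
  · simp
  have hH0 : 0 ≤ H :=
    nonneg_of_mul_nonneg_left ((norm_nonneg _).trans (hH x))
      (norm_pos_iff.mpr (sub_ne_zero.mpr hxy))
  have hseg : ∀ z ∈ segment ℝ y x, ‖g' z - g' y‖ ≤ H * ‖x - y‖ := by
    rintro z ⟨a, b, ha, hb, hab, rfl⟩
    have hz : a • y + b • x - y = b • (x - y) := by
      obtain rfl : a = 1 - b := by linarith
      module
    calc ‖g' (a • y + b • x) - g' y‖ ≤ H * (b * ‖x - y‖) := by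
          simpa [hz, norm_smul, abs_of_nonneg hb] using hH (a • y + b • x)
      _ ≤ H * ‖x - y‖ := by gcongr; nlinarith [norm_nonneg (x - y)]
  have := (convex_segment y x).norm_image_sub_le_of_norm_hasFDerivWithin_le'
    (fun z _ => (hg z).hasFDerivWithinAt) hseg (left_mem_segment ℝ y x) (right_mem_segment ℝ y x)
  rwa [mul_assoc, ← sq] at this

theorem toEuclideanLin_hessMat (f : EuclideanSpace ℝ (Fin d) → ℝ) (θ : EuclideanSpace ℝ (Fin d)) :
    toEuclideanLin (hessMat f θ) = (fderiv ℝ (gradient f) θ : _ →ₗ[ℝ] _) := by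
  refine (EuclideanSpace.basisFun (Fin d) ℝ).toBasis.ext fun j => ?_
  ext i
  simp [hessMat, toLpLin_apply, mulVec_single]

theorem opNormM_hessMat_sub (f : EuclideanSpace ℝ (Fin d) → ℝ) (x y : EuclideanSpace ℝ (Fin d)) :
    opNormM (hessMat f x - hessMat f y) = ‖fderiv ℝ (gradient f) x - fderiv ℝ (gradient f) y‖ := by
  simp only [opNormM, map_sub, toEuclideanLin_hessMat]
  rfl

section Hessian

variable {f : EuclideanSpace ℝ (Fin d) → ℝ}

theorem HessLipschitz.nonneg [NeZero d] {H : ℝ} (hH : HessLipschitz f H) : 0 ≤ H := by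
  have := hH (EuclideanSpace.single 0 1) 0
  simp only [sub_zero, PiLp.norm_single, norm_one, mul_one] at this
  exact (norm_nonneg _).trans this

theorem HessLipschitz.norm_gradient_sub_sub_le {H : ℝ} (hH : HessLipschitz f H)
    (hf : Differentiable ℝ (gradient f)) (θ θ₀ : EuclideanSpace ℝ (Fin d)) :
    ‖gradient f θ - gradient f θ₀ - fderiv ℝ (gradient f) θ₀ (θ - θ₀)‖ ≤ H * ‖θ - θ₀‖ ^ 2 :=
  norm_sub_sub_le_of_lipschitz_fderiv (fun z => (hf z).hasFDerivAt)
    (fun z => opNormM_hessMat_sub f z θ₀ ▸ hH z θ₀) θ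

theorem CoordSmooth.inner_gradient_sub_le {L : Fin d → ℝ} (hs : CoordSmooth f L)
    (θ₁ θ₂ : EuclideanSpace ℝ (Fin d)) :
    ⟪gradient f θ₁ - gradient f θ₂, θ₁ - θ₂⟫ ≤ ∑ i, L i * (θ₁ i - θ₂ i) ^ 2 := by
  have h₁ := abs_le.mp (hs θ₁ trivial θ₂ trivial)
  have h₂ := abs_le.mp (hs θ₂ trivial θ₁ trivial)
  have hsymm : ∑ i, L i * (θ₂ i - θ₁ i) ^ 2 = ∑ i, L i * (θ₁ i - θ₂ i) ^ 2 := by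
    simp only [← neg_sub (θ₁ _) (θ₂ _), neg_sq]
  rw [← neg_sub θ₁ θ₂, inner_neg_right, hsymm] at h₂
  rw [inner_sub_left]
  linarith [h₁.2, h₂.2]

theorem CoordSmooth.inner_hessMat_le {L : Fin d → ℝ} (hs : CoordSmooth f L)
    {θ : EuclideanSpace ℝ (Fin d)} (hf : DifferentiableAt ℝ (gradient f) θ)
    (v : EuclideanSpace ℝ (Fin d)) :
    ⟪v, toEuclideanLin (hessMat f θ) v⟫ ≤ ∑ i, L i * v i ^ 2 := by
  rw [toEuclideanLin_hessMat, ContinuousLinearMap.coe_coe]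
  have hslope := (hf.hasFDerivAt.hasLineDerivAt v).tendsto_slope_zero_right
  have hlim := (tendsto_const_nhds (x := v)).inner (𝕜 := ℝ) hslope
  refine le_of_tendsto hlim (eventually_nhdsWithin_of_forall fun t (ht : 0 < t) => ?_)
  have h := hs.inner_gradient_sub_le (θ + t • v) θ
  have hsum : ∑ i, L i * ((θ + t • v) i - θ i) ^ 2 = t * (t * ∑ i, L i * v i ^ 2) := by
    simp only [PiLp.add_apply, PiLp.smul_apply, smul_eq_mul, add_sub_cancel_left, Finset.mul_sum]
    exact Finset.sum_congr rfl fun i _ => by ring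
  rw [add_sub_cancel_left, inner_smul_right, hsum] at h
  rw [inner_smul_right, real_inner_comm, inv_mul_le_iff₀ ht]
  exact le_of_mul_le_mul_left h ht

end Hessian

section Moments

variable {Ω ι : Type*} [MeasurableSpace Ω] {μ : Measure Ω} [Fintype ι]

theorem inner_sq_eq_sum_sum (w v : EuclideanSpace ℝ ι) :
    ⟪w, v⟫ ^ 2 = ∑ i, ∑ j, w i * w j * (v i * v j) := by
  simp only [PiLp.inner_apply, RCLike.inner_apply, conj_trivial, sq, Finset.sum_mul_sum]
  exact Finset.sum_congr rfl fun i _ => Finset.sum_congr rfl fun j _ => by ring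

theorem inner_toEuclideanLin_eq_sum_sum [DecidableEq ι] (M : Matrix ι ι ℝ)
    (w : EuclideanSpace ℝ ι) : ⟪w, toEuclideanLin M w⟫ = ∑ i, ∑ j, w i * w j * M i j := by
  simp only [PiLp.inner_apply, RCLike.inner_apply, conj_trivial, toLpLin_apply, mulVec,
    dotProduct, Finset.sum_mul]
  exact Finset.sum_congr rfl fun i _ => Finset.sum_congr rfl fun j _ => by ring

theorem integrable_inner_sq {g : Ω → EuclideanSpace ℝ ι}
    (hg : ∀ i j, Integrable (fun ω => g ω i * g ω j) μ) (w : EuclideanSpace ℝ ι) :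
    Integrable (fun ω => ⟪w, g ω⟫ ^ 2) μ := by
  simp only [inner_sq_eq_sum_sum]
  exact integrable_finsetSum _ fun i _ => integrable_finsetSum _ fun j _ => (hg i j).const_mul _

theorem integral_inner_sq {g : Ω → EuclideanSpace ℝ ι}
    (hg : ∀ i j, Integrable (fun ω => g ω i * g ω j) μ) (w : EuclideanSpace ℝ ι) :
    ∫ ω, ⟪w, g ω⟫ ^ 2 ∂μ = ∑ i, ∑ j, w i * w j * ∫ ω, g ω i * g ω j ∂μ := by
  simp only [inner_sq_eq_sum_sum]
  rw [integral_finsetSum _ fun i _ => integrable_finsetSum _ fun j _ => (hg i j).const_mul _]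
  refine Finset.sum_congr rfl fun i _ => ?_
  rw [integral_finsetSum _ fun j _ => (hg i j).const_mul _]
  simp only [integral_const_mul]

theorem integrable_sub_const_sq [IsFiniteMeasure μ] {X : Ω → ℝ} (hX : Integrable X μ)
    (hX2 : Integrable (fun ω => X ω ^ 2) μ) (a : ℝ) :
    Integrable (fun ω => (X ω - a) ^ 2) μ := by
  simp only [sub_sq]
  exact (hX2.sub ((hX.const_mul 2).mul_const a)).add (integrable_const _)

theorem integral_sub_const_sq [IsProbabilityMeasure μ] {X : Ω → ℝ} (hX : Integrable X μ)
    (hX2 : Integrable (fun ω => X ω ^ 2) μ) (hmean : ∫ ω, X ω ∂μ = 0) (a : ℝ) :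
    ∫ ω, (X ω - a) ^ 2 ∂μ = ∫ ω, X ω ^ 2 ∂μ + a ^ 2 := by
  have hlin : Integrable (fun ω => 2 * X ω * a) μ := (hX.const_mul 2).mul_const a
  have hquad : Integrable (fun ω => X ω ^ 2 - 2 * X ω * a) μ := hX2.sub hlin
  simp only [sub_sq]
  rw [integral_add hquad (integrable_const _), integral_sub hX2 hlin,
    integral_mul_const, integral_const_mul, hmean]
  simp

theorem abs_integral_sq_sub_integral_sq_le {G l r : Ω → ℝ} {H K : ℝ}
    (hG : AEStronglyMeasurable G μ) (hl : AEStronglyMeasurable l μ)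
    (hGl : ∀ ω, |G ω - l ω| ≤ H * r ω ^ 2) (hlr : ∀ ω, |l ω| ≤ K * r ω)
    (hl2 : Integrable (fun ω => l ω ^ 2) μ) (hr3 : Integrable (fun ω => r ω ^ 3) μ)
    (hr4 : Integrable (fun ω => r ω ^ 4) μ) :
    |∫ ω, G ω ^ 2 ∂μ - ∫ ω, l ω ^ 2 ∂μ| ≤
      2 * K * H * ∫ ω, r ω ^ 3 ∂μ + H ^ 2 * ∫ ω, r ω ^ 4 ∂μ := by
  set e := fun ω => G ω - l ω
  have hcross : ∀ ω, |l ω * e ω| ≤ K * H * r ω ^ 3 := fun ω => by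
    rw [abs_mul]
    calc |l ω| * |e ω| ≤ (K * r ω) * (H * r ω ^ 2) :=
          mul_le_mul (hlr ω) (hGl ω) (abs_nonneg _) ((abs_nonneg _).trans (hlr ω))
      _ = K * H * r ω ^ 3 := by ring
  have hsq : ∀ ω, e ω ^ 2 ≤ H ^ 2 * r ω ^ 4 := fun ω => by
    have := pow_le_pow_left₀ (abs_nonneg _) (hGl ω) 2
    rw [sq_abs] at this
    linarith
  have he : AEStronglyMeasurable e μ := hG.sub hl
  have hcrossInt : Integrable (fun ω => l ω * e ω) μ :=
    (hr3.const_mul (K * H)).mono' (hl.mul he) (ae_of_all _ hcross)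
  have he2 : Integrable (fun ω => e ω ^ 2) μ :=
    (hr4.const_mul (H ^ 2)).mono' (he.pow 2) (ae_of_all _ fun ω => by
      rw [Real.norm_eq_abs, abs_of_nonneg (sq_nonneg _)]
      exact hsq ω)
  have hsplit : ∫ ω, G ω ^ 2 ∂μ = ∫ ω, l ω ^ 2 ∂μ + (2 * ∫ ω, l ω * e ω ∂μ + ∫ ω, e ω ^ 2 ∂μ) := by
    have hrest : Integrable (fun ω => 2 * (l ω * e ω) + e ω ^ 2) μ :=
      (hcrossInt.const_mul 2).add he2
    rw [← integral_const_mul, ← integral_add (hcrossInt.const_mul 2) he2, ← integral_add hl2 hrest]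
    exact integral_congr_ae (ae_of_all _ fun ω => by simp only [e]; ring)
  have hcrossBound : |∫ ω, l ω * e ω ∂μ| ≤ K * H * ∫ ω, r ω ^ 3 ∂μ := by
    rw [← integral_const_mul]
    exact (abs_integral_le_integral_abs).trans
      (integral_mono hcrossInt.abs (hr3.const_mul _) hcross)
  have hsqBound : ∫ ω, e ω ^ 2 ∂μ ≤ H ^ 2 * ∫ ω, r ω ^ 4 ∂μ := by
    rw [← integral_const_mul]
    exact integral_mono he2 (hr4.const_mul _) hsq
  have hsqNonneg : 0 ≤ ∫ ω, e ω ^ 2 ∂μ := integral_nonneg fun ω => sq_nonneg _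
  rw [hsplit, add_sub_cancel_left, abs_le]
  constructor <;> linarith [abs_le.mp hcrossBound]

end Moments

section Isotropic

variable {ι : Type*} [Fintype ι] {ρ : Measure (EuclideanSpace ℝ ι)} [IsProbabilityMeasure ρ]
  {c : ℝ}

theorem integrable_inner_sub_sq
    (hmeanInt : ∀ i, Integrable (fun θ : EuclideanSpace ℝ ι => θ i) ρ)
    (hcovInt : ∀ i j, Integrable (fun θ : EuclideanSpace ℝ ι => θ i * θ j) ρ)
    (w θs : EuclideanSpace ℝ ι) : Integrable (fun θ => ⟪w, θ - θs⟫ ^ 2) ρ := by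
  simp only [inner_sub_right]
  exact integrable_sub_const_sq ((Integrable.of_eval_piLp hmeanInt).const_inner w)
    (integrable_inner_sq (g := fun θ => θ) hcovInt w) _

theorem integral_inner_sub_sq [DecidableEq ι]
    (hmeanInt : ∀ i, Integrable (fun θ : EuclideanSpace ℝ ι => θ i) ρ)
    (hmean : ∀ i, ∫ θ, θ i ∂ρ = 0)
    (hcovInt : ∀ i j, Integrable (fun θ : EuclideanSpace ℝ ι => θ i * θ j) ρ)
    (hcov : ∀ i j, ∫ θ, θ i * θ j ∂ρ = if i = j then c ^ 2 else 0)
    (w θs : EuclideanSpace ℝ ι) :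
    ∫ θ, ⟪w, θ - θs⟫ ^ 2 ∂ρ = c ^ 2 * ‖w‖ ^ 2 + ⟪w, θs⟫ ^ 2 := by
  have hid : Integrable (fun θ => θ) ρ := Integrable.of_eval_piLp hmeanInt
  have hmean' : ∫ θ, ⟪w, θ⟫ ∂ρ = 0 := by
    have h0 : ∫ θ, θ ∂ρ = 0 := by
      ext i
      rw [eval_integral_piLp hmeanInt, hmean, PiLp.zero_apply]
    rw [integral_inner hid, h0, inner_zero_right]
  simp only [inner_sub_right]
  rw [integral_sub_const_sq (hid.const_inner w) (integrable_inner_sq (g := fun θ => θ) hcovInt w)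
    hmean', integral_inner_sq (g := fun θ => θ) hcovInt]
  simp only [hcov, mul_ite, mul_zero, Finset.sum_ite_eq, Finset.mem_univ, ↓reduceIte,
    EuclideanSpace.norm_sq_eq, Real.norm_eq_abs, sq_abs, add_left_inj]
  rw [Finset.mul_sum]
  exact Finset.sum_congr rfl fun i _ => by ring

end Isotropic

section EGOP

variable {f : EuclideanSpace ℝ (Fin d) → ℝ} {ρ : Measure (EuclideanSpace ℝ (Fin d))}

theorem inner_toEuclideanLin_EGOP
    (hIntEGOP : ∀ i j, Integrable (fun θ => gradient f θ i * gradient f θ j) ρ)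
    (x : EuclideanSpace ℝ (Fin d)) :
    ⟪x, toEuclideanLin (EGOP f ρ) x⟫ = ∫ θ, ⟪x, gradient f θ⟫ ^ 2 ∂ρ := by
  rw [integral_inner_sq hIntEGOP, inner_toEuclideanLin_eq_sum_sum]
  rfl

theorem abs_inner_EGOP_sub_le [IsProbabilityMeasure ρ] {H c : ℝ} {θs : EuclideanSpace ℝ (Fin d)}
    (hf : Differentiable ℝ (gradient f)) (hH : HessLipschitz f H) (hgrad : gradient f θs = 0)
    (hpsd : (hessMat f θs).PosSemidef)
    (hIntEGOP : ∀ i j, Integrable (fun θ => gradient f θ i * gradient f θ j) ρ)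
    (hmeanInt : ∀ i, Integrable (fun θ : EuclideanSpace ℝ (Fin d) => θ i) ρ)
    (hmean : ∀ i, ∫ θ, θ i ∂ρ = 0)
    (hcovInt : ∀ i j, Integrable (fun θ : EuclideanSpace ℝ (Fin d) => θ i * θ j) ρ)
    (hcov : ∀ i j, ∫ θ, θ i * θ j ∂ρ = if i = j then c ^ 2 else 0)
    (hM3 : Integrable (fun θ : EuclideanSpace ℝ (Fin d) => ‖θ - θs‖ ^ 3) ρ)
    (hM4 : Integrable (fun θ : EuclideanSpace ℝ (Fin d) => ‖θ - θs‖ ^ 4) ρ)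
    {x : EuclideanSpace ℝ (Fin d)} (hx : ‖x‖ = 1) :
    |⟪x, toEuclideanLin (EGOP f ρ) x⟫ - (c ^ 2 * ‖toEuclideanLin (hessMat f θs) x‖ ^ 2 +
        ⟪toEuclideanLin (hessMat f θs) x, θs⟫ ^ 2)| ≤
      2 * lambdaMax (hessMat f θs) * H * ∫ θ, ‖θ - θs‖ ^ 3 ∂ρ +
        H ^ 2 * ∫ θ, ‖θ - θs‖ ^ 4 ∂ρ := by
  set A := toEuclideanLin (hessMat f θs)
  have hAsymm : A.IsSymmetric := (isPositive_toEuclideanLin_iff.mpr hpsd).isSymmetric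
  rw [inner_toEuclideanLin_EGOP hIntEGOP, ← integral_inner_sub_sq hmeanInt hmean hcovInt hcov]
  refine abs_integral_sq_sub_integral_sq_le (r := fun θ => ‖θ - θs‖)
    (continuous_const.inner hf.continuous).aestronglyMeasurable
    (continuous_const.inner (continuous_id.sub continuous_const)).aestronglyMeasurable
    (fun θ => ?_) (fun θ => ?_) (integrable_inner_sub_sq hmeanInt hcovInt _ _) hM3 hM4
  · have hA : A (θ - θs) = fderiv ℝ (gradient f) θs (θ - θs) :=
      LinearMap.congr_fun (toEuclideanLin_hessMat f θs) _
    have htaylor := hH.norm_gradient_sub_sub_le hf θ θs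
    rw [hgrad, sub_zero, ← hA] at htaylor
    rw [hAsymm, ← inner_sub_right]
    calc |⟪x, gradient f θ - A (θ - θs)⟫| ≤ ‖x‖ * ‖gradient f θ - A (θ - θs)‖ :=
          abs_real_inner_le_norm _ _
      _ ≤ H * ‖θ - θs‖ ^ 2 := by rwa [hx, one_mul]
  · calc |⟪A x, θ - θs⟫| ≤ ‖A x‖ * ‖θ - θs‖ := abs_real_inner_le_norm _ _
      _ ≤ lambdaMax (hessMat f θs) * ‖θ - θs‖ := by
          gcongr
          simpa [hx] using norm_toEuclideanLin_le hpsd x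

end EGOP

section QuadraticModel

/- `c ^ 2 * ‖A x‖ ^ 2 + ⟪A x, θs⟫ ^ 2` is `⟪x, EGOP x⟫` for the quadratic model
`θ ↦ ⟪θ - θs, A (θ - θs)⟫ / 2` under an isotropic `ρ` of scale `c`. -/

variable {A Q : Matrix (Fin d) (Fin d) ℝ} {θs : EuclideanSpace ℝ (Fin d)} {c γ : ℝ}

theorem lambdaMax_le_sqrt_div (hc : 0 < c)
    (hQ : ∀ x : EuclideanSpace ℝ (Fin d), ‖x‖ = 1 →
      |⟪x, toEuclideanLin Q x⟫ - (c ^ 2 * ‖toEuclideanLin A x‖ ^ 2 + ⟪toEuclideanLin A x, θs⟫ ^ 2)|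
        ≤ γ) :
    lambdaMax A ≤ √(lambdaMax Q + γ) / c := by
  refine lambdaMax_le (by positivity) fun v hv => ?_
  have hlow : (c * ‖toEuclideanLin A v‖) ^ 2 ≤ lambdaMax Q + γ := by
    have hQv := inner_le_lambdaMax Q v
    rw [hv, one_pow, mul_one] at hQv
    nlinarith [(abs_le.mp (hQ v hv)).1, sq_nonneg ⟪toEuclideanLin A v, θs⟫]
  have hcs := real_inner_le_norm v (toEuclideanLin A v)
  rw [hv, one_mul] at hcs
  rw [le_div_iff₀ hc, mul_comm]
  exact (mul_le_mul_of_nonneg_left hcs hc.le).trans (Real.le_sqrt_of_sq_le hlow)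

theorem inner_sub_le_two_mul_sqrt_mul (hA : A.PosSemidef) (hc : 0 < c) (hθs : ‖θs‖ ≤ c)
    (hQ : ∀ x : EuclideanSpace ℝ (Fin d), ‖x‖ = 1 →
      |⟪x, toEuclideanLin Q x⟫ - (c ^ 2 * ‖toEuclideanLin A x‖ ^ 2 + ⟪toEuclideanLin A x, θs⟫ ^ 2)|
        ≤ γ)
    {x : EuclideanSpace ℝ (Fin d)} (hx : ‖x‖ = 1) :
    ⟪x, toEuclideanLin Q x⟫ - γ ≤ 2 * c * √(lambdaMax Q + γ) * ⟪x, toEuclideanLin A x⟫ := by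
  set y := toEuclideanLin A x
  have hshift : ⟪y, θs⟫ ^ 2 ≤ c ^ 2 * ‖y‖ ^ 2 := by
    rw [← sq_abs, mul_comm, ← mul_pow]
    exact pow_le_pow_left₀ (abs_nonneg _)
      ((abs_real_inner_le_norm y θs).trans (by gcongr)) 2
  have hxy : 0 ≤ ⟪x, y⟫ := (isPositive_toEuclideanLin_iff.mpr hA).inner_nonneg_right x
  calc ⟪x, toEuclideanLin Q x⟫ - γ ≤ c ^ 2 * ‖y‖ ^ 2 + ⟪y, θs⟫ ^ 2 := by
        linarith [(abs_le.mp (hQ x hx)).2]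
    _ ≤ 2 * c ^ 2 * ‖y‖ ^ 2 := by linarith
    _ ≤ 2 * c ^ 2 * (lambdaMax A * ⟪x, y⟫) := by gcongr; exact norm_toEuclideanLin_sq_le hA x
    _ ≤ 2 * c ^ 2 * (√(lambdaMax Q + γ) / c * ⟪x, y⟫) := by
        gcongr; exact lambdaMax_le_sqrt_div hc hQ
    _ = 2 * c * √(lambdaMax Q + γ) * ⟪x, y⟫ := by field_simp

end QuadraticModel

section SignVector

variable {ν : Fin d → ℝ}

theorem sq_eq_one_div_of_sign (hν : ∀ i, ν i = 1 / √d ∨ ν i = -(1 / √d)) (i : Fin d) :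
    ν i ^ 2 = 1 / d := by
  rcases hν i with h | h <;> simp [h]

theorem norm_toLp_of_sign [NeZero d] (hν : ∀ i, ν i = 1 / √d ∨ ν i = -(1 / √d)) :
    ‖(WithLp.toLp 2 ν : EuclideanSpace ℝ (Fin d))‖ = 1 := by
  simp [EuclideanSpace.norm_eq, sq_eq_one_div_of_sign hν]

theorem sum_mul_sq_of_sign (hν : ∀ i, ν i = 1 / √d ∨ ν i = -(1 / √d)) (L : Fin d → ℝ) :
    ∑ i, L i * ν i ^ 2 = (∑ i, L i) / d := by
  simp only [sq_eq_one_div_of_sign hν, mul_one_div, Finset.sum_div]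

end SignVector

theorem sum_coord_smoothness_ge_sign_vector_quadratic_form_general
    (d : ℕ) (f : EuclideanSpace ℝ (Fin d) → ℝ) (H c : ℝ)
    (hf : ContDiff ℝ 3 f) (hH : HessLipschitz f H)
    (θs : EuclideanSpace ℝ (Fin d)) (hgrad : gradient f θs = 0)
    (hpsd : (hessMat f θs).PosSemidef)
    (ρ : Measure (EuclideanSpace ℝ (Fin d))) [IsProbabilityMeasure ρ]
    (hIntEGOP : ∀ i j, Integrable (fun θ => gradient f θ i * gradient f θ j) ρ)
    (hmeanInt : ∀ i, Integrable (fun θ : EuclideanSpace ℝ (Fin d) => θ i) ρ)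
    (hmean : ∀ i, ∫ θ, θ i ∂ρ = 0)
    (hcovInt : ∀ i j, Integrable (fun θ : EuclideanSpace ℝ (Fin d) => θ i * θ j) ρ)
    (hcov : ∀ i j, ∫ θ, θ i * θ j ∂ρ = if i = j then c ^ 2 else 0)
    (hc : ‖θs‖ ≤ c) (hcpos : 0 < c)
    (hM3 : Integrable (fun θ : EuclideanSpace ℝ (Fin d) => ‖θ - θs‖ ^ 3) ρ)
    (hM4 : Integrable (fun θ : EuclideanSpace ℝ (Fin d) => ‖θ - θs‖ ^ 4) ρ)
    (γ : ℝ)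
    (hγ : γ = 2 * Real.sqrt d * H * lambdaMax (hessMat f θs) * (∫ θ, ‖θ - θs‖ ^ 3 ∂ρ) +
      d * H ^ 2 * (∫ θ, ‖θ - θs‖ ^ 4 ∂ρ))
    (hpos : 0 < lambdaMax (EGOP f ρ) + γ)
    (L : Fin d → ℝ) (hsmooth : CoordSmooth f L)
    (ν : Fin d → ℝ) (hν : ∀ i, ν i = 1 / Real.sqrt d ∨ ν i = -(1 / Real.sqrt d)) :
    ∑ i, L i ≥
      (d / (2 * c)) *
        ((ν ⬝ᵥ (EGOP f ρ).mulVec ν - γ) / Real.sqrt (lambdaMax (EGOP f ρ) + γ)) := by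
  rcases Nat.eq_zero_or_pos d with rfl | hd
  · simp
  have : NeZero d := ⟨hd.ne'⟩
  have hdiff : Differentiable ℝ (gradient f) :=
    (hf.gradient (m := 1) (by norm_num)).differentiable one_ne_zero
  have herr : 2 * lambdaMax (hessMat f θs) * H * ∫ θ, ‖θ - θs‖ ^ 3 ∂ρ +
      H ^ 2 * ∫ θ, ‖θ - θs‖ ^ 4 ∂ρ ≤ γ := by
    have hd1 : (1 : ℝ) ≤ d := by exact_mod_cast hd
    have h3 : 0 ≤ lambdaMax (hessMat f θs) * H * ∫ θ, ‖θ - θs‖ ^ 3 ∂ρ := by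
      have := lambdaMax_nonneg hpsd
      have := hH.nonneg
      positivity
    have h4 : 0 ≤ H ^ 2 * ∫ θ, ‖θ - θs‖ ^ 4 ∂ρ := by positivity
    rw [hγ]
    nlinarith [mul_le_mul_of_nonneg_right (Real.one_le_sqrt.mpr hd1) h3,
      mul_le_mul_of_nonneg_right hd1 h4]
  have hmain := inner_sub_le_two_mul_sqrt_mul hpsd hcpos hc
    (fun x hx => (abs_inner_EGOP_sub_le hdiff hH hgrad hpsd hIntEGOP hmeanInt hmean hcovInt hcov
      hM3 hM4 hx).trans herr) (norm_toLp_of_sign hν)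
  rw [inner_toLp_toEuclideanLin] at hmain
  have hS := hsmooth.inner_hessMat_le (hdiff θs) (WithLp.toLp 2 ν)
  rw [sum_mul_sq_of_sign hν] at hS
  have hR : 0 ≤ 2 * c * √(lambdaMax (EGOP f ρ) + γ) := by positivity
  calc (d / (2 * c)) * ((ν ⬝ᵥ (EGOP f ρ).mulVec ν - γ) / √(lambdaMax (EGOP f ρ) + γ))
      ≤ (d / (2 * c)) * (2 * c * ((∑ i, L i) / d)) := by
        gcongr
        rw [div_le_iff₀ (Real.sqrt_pos.mpr hpos)]
        nlinarith [mul_le_mul_of_nonneg_left hS hR]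
    _ = ∑ i, L i := by field_simp

/-- lower bound on the sum of coordinate-wise smoothness constants of `f` in terms
of quadratic forms of the EGOP at dense sign vectors: for every `ν ∈ {±1/√d}^d`,
`Σᵢ Lᵢ ≥ (d/(2c)) · (⟨ν, EGOP(f) ν⟩ − γ)/√(λ_max(EGOP(f)) + γ)`. -/
theorem sum_coord_smoothness_ge_sign_vector_quadratic_form
    (d : ℕ) (f : EuclideanSpace ℝ (Fin d) → ℝ) (H c : ℝ)
    (hf : ContDiff ℝ 3 f) (hH : HessLipschitz f H)
    (θs : EuclideanSpace ℝ (Fin d)) (hgrad : gradient f θs = 0)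
    (hpsd : (hessMat f θs).PosSemidef)
    (ρ : Measure (EuclideanSpace ℝ (Fin d))) [IsProbabilityMeasure ρ]
    (hIntEGOP : ∀ i j, Integrable (fun θ => gradient f θ i * gradient f θ j) ρ)
    (hmeanInt : ∀ i, Integrable (fun θ : EuclideanSpace ℝ (Fin d) => θ i) ρ)
    (hmean : ∀ i, ∫ θ, θ i ∂ρ = 0)
    (hcovInt : ∀ i j, Integrable (fun θ : EuclideanSpace ℝ (Fin d) => θ i * θ j) ρ)
    (hcov : ∀ i j, ∫ θ, θ i * θ j ∂ρ = if i = j then c ^ 2 else 0)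
    (hc : ‖θs‖ ≤ c) (hcpos : 0 < c)
    (hM3 : Integrable (fun θ : EuclideanSpace ℝ (Fin d) => ‖θ - θs‖ ^ 3) ρ)
    (hM4 : Integrable (fun θ : EuclideanSpace ℝ (Fin d) => ‖θ - θs‖ ^ 4) ρ)
    (γ : ℝ)
    (hγ : γ = 2 * Real.sqrt d * H * lambdaMax (hessMat f θs) * (∫ θ, ‖θ - θs‖ ^ 3 ∂ρ) +
      d * H ^ 2 * (∫ θ, ‖θ - θs‖ ^ 4 ∂ρ))
    (hpos : 0 < lambdaMax (EGOP f ρ) + γ)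
    (L : Fin d → ℝ) (hL : ∀ i, 0 < L i) (hsmooth : CoordSmooth f L)
    (ν : Fin d → ℝ) (hν : ∀ i, ν i = 1 / Real.sqrt d ∨ ν i = -(1 / Real.sqrt d)) :
    ∑ i, L i ≥
      (d / (2 * c)) *
        ((ν ⬝ᵥ (EGOP f ρ).mulVec ν - γ) / Real.sqrt (lambdaMax (EGOP f ρ) + γ)) :=
  sum_coord_smoothness_ge_sign_vector_quadratic_form_general d f H c hf hH θs hgrad hpsd ρ hIntEGOP
    hmeanInt hmean hcovInt hcov hc hcpos hM3 hM4 γ hγ hpos L hsmooth ν hν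
end
end

section
/- Let f : ℝ^d → ℝ be differentiable, let ρ be a probability measure on ℝ^d such that θ ↦ ∇f(θ)∇f(θ)ᵀ is ρ-integrable, and let V ∈ ℝ^{d×d} be an orthogonal matrix with Vᵀ·EGOP(f)·V = Λ for a diagonal matrix Λ (i.e. the columns of V form an orthonormal eigenbasis of EGOP(f)). If the pushforward of ρ under θ ↦ Vθ equals ρ, then the reparameterized function f̃(θ) := f(Vθ) satisfies EGOP(f̃) = Λ; in particular EGOP(f̃) is diagonal with the eigenvalues of EGOP(f) on its diagonal. -/
/-! The chain rule gives `∇(f ∘ V)(θ) = Vᵀ ∇f(Vθ)`, so the gradient outer products of `f ∘ V` are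
`Vᵀ (∇f ∇fᵀ)(Vθ) V`; integrating against `ρ` and changing variables gives
`EGOP(f ∘ V, ρ) = Vᵀ EGOP(f, V₊ρ) V`, which is `Vᵀ EGOP(f, ρ) V = Λ` once `V₊ρ = ρ`. -/

open MeasureTheory Matrix
open scoped RealInnerProductSpace

noncomputable section

variable {d : ℕ}

theorem measurable_gradient {F : Type*} [NormedAddCommGroup F] [InnerProductSpace ℝ F]
    [CompleteSpace F] [MeasurableSpace F] [BorelSpace F] [SecondCountableTopology F]
    (f : F → ℝ) : Measurable (gradient f) :=
  (InnerProductSpace.toDual ℝ F).symm.continuous.measurable.comp (measurable_fderiv ℝ f)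

theorem HasGradientAt.comp_continuousLinearMap {𝕜 E F : Type*} [RCLike 𝕜]
    [NormedAddCommGroup E] [InnerProductSpace 𝕜 E] [CompleteSpace E]
    [NormedAddCommGroup F] [InnerProductSpace 𝕜 F] [CompleteSpace F]
    {f : F → 𝕜} {g : F} {x : E} (A : E →L[𝕜] F) (h : HasGradientAt f g (A x)) :
    HasGradientAt (f ∘ A) (A.adjoint g) x := by
  rw [hasGradientAt_iff_hasFDerivAt] at h ⊢
  refine (h.comp x A.hasFDerivAt).congr_fderiv ?_
  ext v
  simp [ContinuousLinearMap.adjoint_inner_left]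

theorem gradient_comp_toEuclideanLin {n : Type*} [Fintype n] [DecidableEq n]
    {f : EuclideanSpace ℝ n → ℝ} (V : Matrix n n ℝ) (θ : EuclideanSpace ℝ n)
    (hf : DifferentiableAt ℝ f (toEuclideanLin V θ)) :
    gradient (fun x => f (toEuclideanLin V x)) θ =
      toEuclideanLin Vᵀ (gradient f (toEuclideanLin V θ)) := by
  have := hf.hasGradientAt.comp_continuousLinearMap (toEuclideanCLM (𝕜 := ℝ) V)
  rw [← ContinuousLinearMap.star_eq_adjoint, ← map_star, star_eq_conjTranspose,
    conjTranspose_eq_transpose_of_trivial] at this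
  exact this.gradient

theorem integral_sum_mul_sum {α ι : Type*} [MeasurableSpace α] [Fintype ι] {μ : Measure α}
    {g : ι → α → ℝ} (hg : ∀ k l, Integrable (fun x => g k x * g l x) μ) (a b : ι → ℝ) :
    ∫ x, (∑ k, a k * g k x) * (∑ l, b l * g l x) ∂μ
      = ∑ k, ∑ l, a k * b l * ∫ x, g k x * g l x ∂μ := by
  have hterm : ∀ k l, Integrable (fun x => a k * g k x * (b l * g l x)) μ := fun k l => by
    simpa [mul_mul_mul_comm] using (hg k l).const_mul (a k * b l)
  simp_rw [Finset.sum_mul_sum]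
  rw [integral_finsetSum _ fun k _ => integrable_finsetSum _ fun l _ => hterm k l]
  refine Finset.sum_congr rfl fun k _ => ?_
  rw [integral_finsetSum _ fun l _ => hterm k l]
  refine Finset.sum_congr rfl fun l _ => ?_
  rw [← integral_const_mul]
  congr 1 with x
  ring

theorem transpose_mul_mul_apply {n : Type*} [Fintype n] (V M : Matrix n n ℝ) (i j : n) :
    (Vᵀ * M * V) i j = ∑ k, ∑ l, V k i * V l j * M k l := by
  simp only [mul_apply, transpose_apply, Finset.sum_mul]
  rw [Finset.sum_comm]
  exact Finset.sum_congr rfl fun k _ => Finset.sum_congr rfl fun l _ => by ring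

theorem EGOP_comp_toEuclideanLin {f : EuclideanSpace ℝ (Fin d) → ℝ} (hf : Differentiable ℝ f)
    (ρ : Measure (EuclideanSpace ℝ (Fin d))) (V : Matrix (Fin d) (Fin d) ℝ)
    (hInt : ∀ i j, Integrable (fun θ => gradient f θ i * gradient f θ j)
      (ρ.map (toEuclideanLin V))) :
    EGOP (fun θ => f (toEuclideanLin V θ)) ρ = Vᵀ * EGOP f (ρ.map (toEuclideanLin V)) * V := by
  ext i j
  have hVmeas : Measurable (toEuclideanLin V) :=
    (LinearMap.continuous_of_finiteDimensional _).measurable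
  have hmeas : AEStronglyMeasurable (fun x => (∑ k, V k i * gradient f x k) *
      (∑ l, V l j * gradient f x l)) (ρ.map (toEuclideanLin V)) := by
    have hgrad := measurable_gradient f
    fun_prop
  calc EGOP (fun θ => f (toEuclideanLin V θ)) ρ i j
      = ∫ θ, (∑ k, V k i * gradient f (toEuclideanLin V θ) k) *
          (∑ l, V l j * gradient f (toEuclideanLin V θ) l) ∂ρ := by
        simp only [EGOP, gradient_comp_toEuclideanLin V _ (hf _)]
        simp [toLpLin_apply, mulVec, dotProduct]
    _ = ∫ x, (∑ k, V k i * gradient f x k) * (∑ l, V l j * gradient f x l)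
          ∂(ρ.map (toEuclideanLin V)) := (integral_map hVmeas.aemeasurable hmeas).symm
    _ = (Vᵀ * EGOP f (ρ.map (toEuclideanLin V)) * V) i j := by
        rw [integral_sum_mul_sum hInt, transpose_mul_mul_apply]
        rfl

theorem EGOP_reparam_diagonalizes_general
    (d : ℕ) (f : EuclideanSpace ℝ (Fin d) → ℝ) (hf : Differentiable ℝ f)
    (ρ : Measure (EuclideanSpace ℝ (Fin d)))
    (hInt : ∀ i j, Integrable (fun θ => gradient f θ i * gradient f θ j) ρ)
    (V : Matrix (Fin d) (Fin d) ℝ)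
    (Λ : Fin d → ℝ) (hdiag : Vᵀ * EGOP f ρ * V = Matrix.diagonal Λ)
    (hρV : ρ.map (fun θ => Matrix.toEuclideanLin V θ) = ρ) :
    EGOP (fun θ => f (Matrix.toEuclideanLin V θ)) ρ = Matrix.diagonal Λ := by
  change ρ.map (toEuclideanLin V) = ρ at hρV
  rw [EGOP_comp_toEuclideanLin hf ρ V (by rwa [hρV]), hρV, hdiag]

/-- If the columns of the orthogonal matrix `V` form an orthonormal eigenbasis of
`EGOP(f)`, i.e. `Vᵀ · EGOP(f) · V = Λ` with `Λ` diagonal, and the pushforward of `ρ` under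
`θ ↦ Vθ` equals `ρ`, then `f̃(θ) := f(Vθ)` satisfies `EGOP(f̃) = Λ`: it is diagonal with the
eigenvalues of `EGOP(f)` on its diagonal. -/
theorem EGOP_reparam_diagonalizes
    (d : ℕ) (f : EuclideanSpace ℝ (Fin d) → ℝ) (hf : Differentiable ℝ f)
    (ρ : Measure (EuclideanSpace ℝ (Fin d))) [IsProbabilityMeasure ρ]
    (hInt : ∀ i j, Integrable (fun θ => gradient f θ i * gradient f θ j) ρ)
    (V : Matrix (Fin d) (Fin d) ℝ) (hV : Vᵀ * V = 1)
    (Λ : Fin d → ℝ) (hdiag : Vᵀ * EGOP f ρ * V = Matrix.diagonal Λ)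
    (hρV : ρ.map (fun θ => Matrix.toEuclideanLin V θ) = ρ) :
    EGOP (fun θ => f (Matrix.toEuclideanLin V θ)) ρ = Matrix.diagonal Λ :=
  EGOP_reparam_diagonalizes_general d f hf ρ hInt V Λ hdiag hρV

end
end

section
/- Let h : ℝⁿ → ℝ be differentiable, let A ∈ ℝ^{n×n} be nonsingular, and define f : ℝⁿ → ℝ by f(θ) := h(Aθ). Let ρ be a probability measure on ℝⁿ such that the matrix M := E_{θ∼ρ}[∇h(Aθ)·∇h(Aθ)ᵀ] is well defined (integrable) and positive definite, so that EGOP(f) = Aᵀ·M·A is positive definite. Then for every k ∈ {1,…,n}, λ_k(EGOP(f))/λ₁(EGOP(f)) ≤ (σ_k(A)/σ₁(A))² · λ₁(M)/λ_n(M), where λ_i(·) denotes the i-th largest eigenvalue and σ_i(A) the i-th largest singular value of A. -/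
/-!
Write `S = AᵀMA` and index eigenvalues from the top. Upper bound (Courant–Fischer): the span of
the top `k` eigenvectors of `S` meets the span of the bottom `n - k + 1` right singular vectors
of `A`; for a nonzero `v` in the intersection,
`λ_k(S) |v|² ≤ vᵀSv = (Av)ᵀM(Av) ≤ λ₁(M) |Av|² ≤ λ₁(M) σ_k² |v|²`.
Lower bound: for the top right singular vector `v` of `A`,
`λ₁(S) ≥ vᵀSv ≥ λ_n(M) |Av|² = λ_n(M) σ₁²`.
Dividing gives the claim; `σ₁ > 0` because `0 < λ₁(S) ≤ λ₁(M) σ₁²`.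
-/

open MeasureTheory Matrix
open scoped RealInnerProductSpace

noncomputable section

variable {d : ℕ}

namespace Matrix

variable {ι : Type*} [Fintype ι]

theorem exists_ne_zero_mulVec_eq_zero_above_below {K : Type*} [Field K] [LinearOrder ι]
    (U P : Matrix ι ι K) (k : ι) :
    ∃ v ≠ 0, (∀ i, k < i → (U *ᵥ v) i = 0) ∧ (∀ i, i < k → (P *ᵥ v) i = 0) := by
  let C : Matrix ι ι K := of fun i => if k < i then U i else if i < k then P i else 0
  obtain ⟨v, hv, hCv⟩ := exists_mulVec_eq_zero_iff.mpr <|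
    det_eq_zero_of_row_eq_zero (A := C) k fun j => by simp [C]
  refine ⟨v, hv, fun i hi => ?_, fun i hi => ?_⟩
  · simpa [C, mulVec, hi] using congrFun hCv i
  · simpa [C, mulVec, hi, hi.not_gt] using congrFun hCv i

theorem dotProduct_self_pos {R : Type*} [Ring R] [LinearOrder R] [IsStrictOrderedRing R]
    {v : ι → R} (hv : v ≠ 0) : 0 < v ⬝ᵥ v :=
  lt_of_le_of_ne' (Finset.sum_nonneg fun i _ => mul_self_nonneg (v i))
    (dotProduct_self_eq_zero.not.mpr hv)

theorem dotProduct_mulVec_transpose_mul_mul {R : Type*} [CommSemiring R]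
    (A M : Matrix ι ι R) (v : ι → R) :
    v ⬝ᵥ (Aᵀ * M * A) *ᵥ v = (A *ᵥ v) ⬝ᵥ M *ᵥ (A *ᵥ v) := by
  rw [← mulVec_mulVec, ← mulVec_mulVec, dotProduct_mulVec, vecMul_transpose]

theorem dotProduct_mulVec_transpose_mul {R : Type*} [CommSemiring R]
    (A : Matrix ι ι R) (v : ι → R) :
    v ⬝ᵥ (Aᵀ * A) *ᵥ v = (A *ᵥ v) ⬝ᵥ (A *ᵥ v) := by
  rw [← mulVec_mulVec, dotProduct_mulVec, vecMul_transpose]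

section Spectral

variable [DecidableEq ι] {Q : Matrix ι ι ℝ} {d v : ι → ℝ} {c : ℝ}

theorem dotProduct_mulVec_conj_diagonal (Q : Matrix ι ι ℝ) (d v : ι → ℝ) :
    v ⬝ᵥ (Q * diagonal d * Qᵀ) *ᵥ v = ∑ i, d i * (Qᵀ *ᵥ v) i ^ 2 := by
  rw [← mulVec_mulVec, ← mulVec_mulVec, dotProduct_mulVec, ← mulVec_transpose]
  simp only [dotProduct, mulVec_diagonal]
  exact Finset.sum_congr rfl fun i _ => by ring

theorem sum_sq_transpose_mulVec (hQ : Qᵀ * Q = 1) (v : ι → ℝ) :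
    ∑ i, (Qᵀ *ᵥ v) i ^ 2 = v ⬝ᵥ v := by
  have h := dotProduct_mulVec_conj_diagonal Q (fun _ => 1) v
  simp only [diagonal_one, mul_one, mul_eq_one_comm.mp hQ, one_mulVec, one_mul] at h
  exact h.symm

theorem dotProduct_mulVec_conj_diagonal_le (hQ : Qᵀ * Q = 1)
    (hd : ∀ i, (Qᵀ *ᵥ v) i ≠ 0 → d i ≤ c) :
    v ⬝ᵥ (Q * diagonal d * Qᵀ) *ᵥ v ≤ c * (v ⬝ᵥ v) := by
  rw [dotProduct_mulVec_conj_diagonal, ← sum_sq_transpose_mulVec hQ, Finset.mul_sum]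
  refine Finset.sum_le_sum fun i _ => ?_
  by_cases hi : (Qᵀ *ᵥ v) i = 0
  · simp [hi]
  · exact mul_le_mul_of_nonneg_right (hd i hi) (sq_nonneg _)

theorem le_dotProduct_mulVec_conj_diagonal (hQ : Qᵀ * Q = 1)
    (hd : ∀ i, (Qᵀ *ᵥ v) i ≠ 0 → c ≤ d i) :
    c * (v ⬝ᵥ v) ≤ v ⬝ᵥ (Q * diagonal d * Qᵀ) *ᵥ v := by
  rw [dotProduct_mulVec_conj_diagonal, ← sum_sq_transpose_mulVec hQ, Finset.mul_sum]
  refine Finset.sum_le_sum fun i _ => ?_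
  by_cases hi : (Qᵀ *ᵥ v) i = 0
  · simp [hi]
  · exact mul_le_mul_of_nonneg_right (hd i hi) (sq_nonneg _)

theorem dotProduct_mulVec_conj_diagonal_single (hQ : Qᵀ * Q = 1) (d : ι → ℝ) (i : ι) :
    Q *ᵥ Pi.single i 1 ⬝ᵥ (Q * diagonal d * Qᵀ) *ᵥ (Q *ᵥ Pi.single i 1) = d i := by
  rw [dotProduct_mulVec_conj_diagonal, mulVec_mulVec, hQ, one_mulVec]
  simp [Pi.single_apply]

theorem PosDef.pos_of_eq_conj_diagonal (hQ : Qᵀ * Q = 1)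
    (hS : (Q * diagonal d * Qᵀ).PosDef) (i : ι) : 0 < d i := by
  have hQe : Qᵀ *ᵥ (Q *ᵥ Pi.single i 1) = Pi.single i 1 := by
    rw [mulVec_mulVec, hQ, one_mulVec]
  have hv : Q *ᵥ Pi.single i 1 ≠ 0 := fun h0 => by
    simpa [h0] using congrFun hQe i
  have hpos := hS.dotProduct_mulVec_pos hv
  rwa [star_trivial, dotProduct_mulVec_conj_diagonal_single hQ] at hpos

variable {A M U P : Matrix ι ι ℝ} {μ s : ι → ℝ}

theorem eigenvalue_transpose_mul_mul_le [LinearOrder ι]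
    (hM : ∀ w, w ⬝ᵥ M *ᵥ w ≤ c * (w ⬝ᵥ w)) (hc : 0 ≤ c)
    (hU : Uᵀ * U = 1) (hμ : Antitone μ) (hUdiag : Aᵀ * M * A = U * diagonal μ * Uᵀ)
    (hP : Pᵀ * P = 1) (hs : Antitone s) (hPdiag : Aᵀ * A = P * diagonal s * Pᵀ) (k : ι) :
    μ k ≤ c * s k := by
  obtain ⟨v, hv, hUv, hPv⟩ := exists_ne_zero_mulVec_eq_zero_above_below Uᵀ Pᵀ k
  have hlow : μ k * (v ⬝ᵥ v) ≤ v ⬝ᵥ (Aᵀ * M * A) *ᵥ v := by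
    rw [hUdiag]
    exact le_dotProduct_mulVec_conj_diagonal hU fun i hi =>
      hμ (not_lt.mp fun hki => hi (hUv i hki))
  have hAv : (A *ᵥ v) ⬝ᵥ (A *ᵥ v) ≤ s k * (v ⬝ᵥ v) := by
    rw [← dotProduct_mulVec_transpose_mul, hPdiag]
    exact dotProduct_mulVec_conj_diagonal_le hP fun i hi =>
      hs (not_lt.mp fun hik => hi (hPv i hik))
  have hup : v ⬝ᵥ (Aᵀ * M * A) *ᵥ v ≤ c * s k * (v ⬝ᵥ v) :=
    calc v ⬝ᵥ (Aᵀ * M * A) *ᵥ v = (A *ᵥ v) ⬝ᵥ M *ᵥ (A *ᵥ v) :=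
          dotProduct_mulVec_transpose_mul_mul A M v
      _ ≤ c * ((A *ᵥ v) ⬝ᵥ (A *ᵥ v)) := hM _
      _ ≤ c * (s k * (v ⬝ᵥ v)) := mul_le_mul_of_nonneg_left hAv hc
      _ = c * s k * (v ⬝ᵥ v) := (mul_assoc _ _ _).symm
  exact le_of_mul_le_mul_right (hlow.trans hup) (dotProduct_self_pos hv)

theorem le_eigenvalue_transpose_mul_mul {j₀ : ι}
    (hM : ∀ w, c * (w ⬝ᵥ w) ≤ w ⬝ᵥ M *ᵥ w)
    (hU : Uᵀ * U = 1) (hμ : ∀ j, μ j ≤ μ j₀) (hUdiag : Aᵀ * M * A = U * diagonal μ * Uᵀ)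
    (hP : Pᵀ * P = 1) (hPdiag : Aᵀ * A = P * diagonal s * Pᵀ) (i : ι) :
    c * s i ≤ μ j₀ := by
  set v := P *ᵥ Pi.single i 1
  have hv : v ⬝ᵥ v = 1 := by
    rw [← sum_sq_transpose_mulVec hP, mulVec_mulVec, hP, one_mulVec]
    simp [Pi.single_apply]
  calc c * s i = c * ((A *ᵥ v) ⬝ᵥ (A *ᵥ v)) := by
        rw [← dotProduct_mulVec_transpose_mul, hPdiag, dotProduct_mulVec_conj_diagonal_single hP]
    _ ≤ (A *ᵥ v) ⬝ᵥ M *ᵥ (A *ᵥ v) := hM _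
    _ = v ⬝ᵥ (U * diagonal μ * Uᵀ) *ᵥ v := by
        rw [← dotProduct_mulVec_transpose_mul_mul, hUdiag]
    _ ≤ μ j₀ * (v ⬝ᵥ v) := dotProduct_mulVec_conj_diagonal_le hU fun j _ => hμ j
    _ = μ j₀ := by rw [hv, mul_one]

end Spectral

end Matrix

theorem EGOP_eigenvalue_ratio_le_of_data_decay_general
    (n : ℕ) (hn : 0 < n)
    (A : Matrix (Fin n) (Fin n) ℝ)
    (M : Matrix (Fin n) (Fin n) ℝ)
    (hMpos : M.PosDef)
    (hEGOPpos : (Aᵀ * M * A).PosDef)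
    -- eigenvalues of `EGOP(f)` in decreasing order
    (μ : Fin n → ℝ) (hμ : Antitone μ)
    (U : Matrix (Fin n) (Fin n) ℝ) (hU : Uᵀ * U = 1)
    (hUdiag : Aᵀ * M * A = U * Matrix.diagonal μ * Uᵀ)
    -- eigenvalues of `M` in decreasing order
    (ν : Fin n → ℝ) (hν : Antitone ν)
    (W : Matrix (Fin n) (Fin n) ℝ) (hW : Wᵀ * W = 1)
    (hWdiag : M = W * Matrix.diagonal ν * Wᵀ)
    -- singular values of `A` in decreasing order
    (σ : Fin n → ℝ) (hσ : Antitone σ) (hσnn : ∀ i, 0 ≤ σ i)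
    (P : Matrix (Fin n) (Fin n) ℝ) (hP : Pᵀ * P = 1)
    (hPdiag : Aᵀ * A = P * Matrix.diagonal (fun i => σ i ^ 2) * Pᵀ)
    (k : Fin n) :
    μ k / μ ⟨0, hn⟩ ≤ (σ k / σ ⟨0, hn⟩) ^ 2 * (ν ⟨0, hn⟩ / ν ⟨n - 1, Nat.sub_lt hn one_pos⟩) := by
  set first : Fin n := ⟨0, hn⟩
  set last : Fin n := ⟨n - 1, Nat.sub_lt hn one_pos⟩
  have hνpos : ∀ i, 0 < ν i := PosDef.pos_of_eq_conj_diagonal hW (hWdiag ▸ hMpos)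
  have hμpos : 0 < μ first := PosDef.pos_of_eq_conj_diagonal hU (hUdiag ▸ hEGOPpos) first
  have hMle : ∀ w, w ⬝ᵥ M *ᵥ w ≤ ν first * (w ⬝ᵥ w) := fun w => hWdiag ▸
    dotProduct_mulVec_conj_diagonal_le hW fun _ _ => hν (Nat.zero_le _)
  have hMge : ∀ w, ν last * (w ⬝ᵥ w) ≤ w ⬝ᵥ M *ᵥ w := fun w => hWdiag ▸
    le_dotProduct_mulVec_conj_diagonal hW fun i _ => hν (Nat.le_sub_one_of_lt i.isLt)
  have hup : ∀ i, μ i ≤ ν first * σ i ^ 2 :=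
    eigenvalue_transpose_mul_mul_le hMle (hνpos first).le hU hμ hUdiag hP
      (fun i j hij => pow_le_pow_left₀ (hσnn j) (hσ hij) 2) hPdiag
  have hlow : ν last * σ first ^ 2 ≤ μ first :=
    le_eigenvalue_transpose_mul_mul hMge hU (fun _ => hμ (Nat.zero_le _)) hUdiag hP hPdiag first
  have hσfirst : 0 < σ first ^ 2 :=
    pos_of_mul_pos_right (hμpos.trans_le (hup first)) (hνpos first).le
  calc μ k / μ first ≤ ν first * σ k ^ 2 / (ν last * σ first ^ 2) :=
        div_le_div₀ (mul_nonneg (hνpos first).le (sq_nonneg _)) (hup k)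
          (mul_pos (hνpos last) hσfirst) hlow
    _ = (σ k / σ first) ^ 2 * (ν first / ν last) := by ring

/-- For `f = h ∘ A` with `A` nonsingular and
`M := E_{θ∼ρ}[∇h(Aθ)∇h(Aθ)ᵀ]` positive definite (so `EGOP(f) = AᵀMA` is positive definite),
the ordered eigenvalues satisfy `λ_k(EGOP(f))/λ₁(EGOP(f)) ≤ (σ_k(A)/σ₁(A))² · λ₁(M)/λ_n(M)`.
Ordered eigenvalues/singular values are expressed via antitone spectral decompositions. -/
theorem EGOP_eigenvalue_ratio_le_of_data_decay
    (n : ℕ) (hn : 0 < n) (h : EuclideanSpace ℝ (Fin n) → ℝ) (hh : Differentiable ℝ h)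
    (A : Matrix (Fin n) (Fin n) ℝ) (hA : IsUnit A.det)
    (ρ : Measure (EuclideanSpace ℝ (Fin n))) [IsProbabilityMeasure ρ]
    (M : Matrix (Fin n) (Fin n) ℝ)
    (hM : M = fun i j => ∫ θ, gradient h (Matrix.toEuclideanLin A θ) i *
      gradient h (Matrix.toEuclideanLin A θ) j ∂ρ)
    (hMpos : M.PosDef)
    (hEGOP : EGOP (fun θ => h (Matrix.toEuclideanLin A θ)) ρ = Aᵀ * M * A)
    (hEGOPpos : (Aᵀ * M * A).PosDef)
    -- eigenvalues of `EGOP(f)` in decreasing order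
    (μ : Fin n → ℝ) (hμ : Antitone μ)
    (U : Matrix (Fin n) (Fin n) ℝ) (hU : Uᵀ * U = 1)
    (hUdiag : Aᵀ * M * A = U * Matrix.diagonal μ * Uᵀ)
    -- eigenvalues of `M` in decreasing order
    (ν : Fin n → ℝ) (hν : Antitone ν)
    (W : Matrix (Fin n) (Fin n) ℝ) (hW : Wᵀ * W = 1)
    (hWdiag : M = W * Matrix.diagonal ν * Wᵀ)
    -- singular values of `A` in decreasing order
    (σ : Fin n → ℝ) (hσ : Antitone σ) (hσnn : ∀ i, 0 ≤ σ i)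
    (P : Matrix (Fin n) (Fin n) ℝ) (hP : Pᵀ * P = 1)
    (hPdiag : Aᵀ * A = P * Matrix.diagonal (fun i => σ i ^ 2) * Pᵀ)
    (k : Fin n) :
    μ k / μ ⟨0, hn⟩ ≤ (σ k / σ ⟨0, hn⟩) ^ 2 * (ν ⟨0, hn⟩ / ν ⟨n - 1, Nat.sub_lt hn one_pos⟩) :=
  EGOP_eigenvalue_ratio_le_of_data_decay_general n hn A M hMpos hEGOPpos μ hμ U hU hUdiag ν hν W hW
    hWdiag σ hσ hσnn P hP hPdiag k
end
end

section
/- There exist dimensions n, m ≥ 2 and an orthogonal matrix V ∈ ℝ^{nm×nm} such that for all orthogonal matrices Q_L ∈ ℝ^{n×n} and Q_R ∈ ℝ^{m×m}, Q_Rᵀ ⊗ Q_Lᵀ ≠ V; consequently there is no pair of orthogonal matrices (Q_L, Q_R) with Q_Lᵀ·mat(g)·Q_R = mat(V·g) for all g ∈ ℝ^{nm}. A witness is any orthogonal V whose first column is the normalized all-ones vector (nm)^{−1/2}·𝟙 and whose second column is (nm)^{−1/2}·(𝟙_{nm/2}, −𝟙_{nm/2}) (with nm even). -/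
/-!
Every Kronecker product `A ⊗ B` satisfies the exchange relations
`M (a,b) (c,d) * M (a',b') (c',d') = M (a,b') (c,d') * M (a',b) (c',d)`, since both sides equal
`A a c * A a' c' * B b d * B b' d'`. The permutation matrix of the transposition of `(0,0)` and
`(1,1)` violates one of them (the left side is `1 * 1`, the right side `0 * 0`), so this
orthogonal matrix is not a Kronecker product. The vec identity `mat((A ⊗ B) g) = B mat(g) Aᵀ`
shows that a pair `(Q_L, Q_R)` with `Q_Lᵀ mat(g) Q_R = mat(V g)` for all `g` forces
`V = Q_Rᵀ ⊗ Q_Lᵀ`.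
-/

open Matrix
open scoped Kronecker

noncomputable section

/-- Inverse of the column-stacking vectorization, `mat : ℝ^{nm} → ℝ^{n×m}` (indexing `ℝ^{nm}`
by `Fin m × Fin n`, column index first). -/
def matM {n m : ℕ} (g : Fin m × Fin n → ℝ) : Matrix (Fin n) (Fin m) ℝ := fun i j => g (j, i)

namespace Matrix

theorem kronecker_apply_mul_kronecker_apply_exchange {R l m n p : Type*} [CommSemiring R]
    (A : Matrix l m R) (B : Matrix n p R) (a a' : l) (b b' : n) (c c' : m) (d d' : p) :
    (A ⊗ₖ B) (a, b) (c, d) * (A ⊗ₖ B) (a', b') (c', d') =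
      (A ⊗ₖ B) (a, b') (c, d') * (A ⊗ₖ B) (a', b) (c', d) := by
  simp only [kroneckerMap_apply]
  ring

theorem transpose_permMatrix_mul_self {n R : Type*} [DecidableEq n] [Fintype n]
    [NonAssocSemiring R] (σ : Equiv.Perm n) : (σ.permMatrix R)ᵀ * σ.permMatrix R = 1 := by
  rw [transpose_permMatrix, ← permMatrix_mul, mul_inv_cancel, permMatrix_one]

theorem permMatrix_swap_ne_kronecker {R l n : Type*} [CommSemiring R] [Nontrivial R]
    [DecidableEq l] [DecidableEq n] {a a' : l} {b b' : n} (ha : a ≠ a') (hb : b ≠ b')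
    (A : Matrix l l R) (B : Matrix n n R) :
    (Equiv.swap (a, b) (a', b')).permMatrix R ≠ A ⊗ₖ B := by
  intro hAB
  have key := kronecker_apply_mul_kronecker_apply_exchange A B a a b b' a' a b' b'
  simp only [← hAB, PEquiv.toMatrix_apply, Equiv.toPEquiv_apply, Option.mem_def,
    Option.some.injEq, Equiv.swap_apply_def] at key
  simp [ha, ha.symm, hb.symm] at key

end Matrix

theorem matM_injective {n m : ℕ} : Function.Injective (matM : (Fin m × Fin n → ℝ) → _) :=
  fun _ _ h => funext fun ⟨j, i⟩ => congrFun₂ h i j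

theorem matM_kronecker_mulVec {n m n' m' : ℕ} (A : Matrix (Fin m') (Fin m) ℝ)
    (B : Matrix (Fin n') (Fin n) ℝ) (g : Fin m × Fin n → ℝ) :
    matM ((A ⊗ₖ B) *ᵥ g) = B * matM g * Aᵀ := by
  ext i j
  simp only [matM, mulVec, dotProduct, mul_apply, transpose_apply, kroneckerMap_apply,
    Fintype.sum_prod_type, Finset.sum_mul]
  exact Finset.sum_congr rfl fun _ _ => Finset.sum_congr rfl fun _ _ => by ring

theorem eq_kronecker_of_forall_matM_mulVec {n m : ℕ}
    {QL : Matrix (Fin n) (Fin n) ℝ} {QR : Matrix (Fin m) (Fin m) ℝ}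
    {V : Matrix (Fin m × Fin n) (Fin m × Fin n) ℝ}
    (h : ∀ g : Fin m × Fin n → ℝ, QLᵀ * matM g * QR = matM (V *ᵥ g)) :
    V = QRᵀ ⊗ₖ QLᵀ :=
  ext_iff_mulVec.mpr fun g => matM_injective <| by
    rw [← h, matM_kronecker_mulVec, transpose_transpose]

/-- There exist dimensions `n, m ≥ 2` and an orthogonal matrix
`V ∈ ℝ^{nm×nm}` which is not of the form `Q_Rᵀ ⊗ Q_Lᵀ` for any orthogonal `Q_L, Q_R`;
consequently no pair of orthogonal matrices satisfies `Q_Lᵀ · mat(g) · Q_R = mat(V g)`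
for all `g ∈ ℝ^{nm}`. -/
theorem exists_orthogonal_not_kronecker :
    ∃ (n m : ℕ), 2 ≤ n ∧ 2 ≤ m ∧
      ∃ V : Matrix (Fin m × Fin n) (Fin m × Fin n) ℝ, Vᵀ * V = 1 ∧
        (∀ (QL : Matrix (Fin n) (Fin n) ℝ) (QR : Matrix (Fin m) (Fin m) ℝ),
          QLᵀ * QL = 1 → QRᵀ * QR = 1 → QRᵀ ⊗ₖ QLᵀ ≠ V) ∧
        ¬ ∃ (QL : Matrix (Fin n) (Fin n) ℝ) (QR : Matrix (Fin m) (Fin m) ℝ),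
            QLᵀ * QL = 1 ∧ QRᵀ * QR = 1 ∧
            ∀ g : Fin m × Fin n → ℝ, QLᵀ * matM g * QR = matM (V.mulVec g) := by
  have not_kronecker (QL QR : Matrix (Fin 2) (Fin 2) ℝ) :
      (Equiv.swap ((0 : Fin 2), (0 : Fin 2)) (1, 1)).permMatrix ℝ ≠ QRᵀ ⊗ₖ QLᵀ :=
    permMatrix_swap_ne_kronecker zero_ne_one zero_ne_one _ _
  refine ⟨2, 2, le_rfl, le_rfl, _, transpose_permMatrix_mul_self _,
    fun QL QR _ _ h => not_kronecker QL QR h.symm, ?_⟩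
  rintro ⟨QL, QR, -, -, h⟩
  exact not_kronecker QL QR (eq_kronecker_of_forall_matM_mulVec h)

end
end
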